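/- For any non-negative integers a, b, c, d with ad − bc = 1, there exist non-negative integers n and m with 0 ≤ m ≤ 2^n − 1 such that a = s(m+1), b = s(m), c = s(2^n − (m+1)), d = s(2^n − m), where s is Stern's diatomic sequence. -/

import Mathlib

/-- Stern's diatomic sequence: s(0)=0, s(1)=1, s(2m)=s(m), s(2m+1)=s(m)+s(m+1). -/
def stern : ℕ → ℕ
  | 0 => 0
  | 1 => 1
  | n + 2 =>
    if _h : n % 2 = 0 then stern (n / 2 + 1)
    else stern (n / 2 + 1) + stern (n / 2 + 2)
decreasing_by
  · omega
  · omega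
  · omega

/-!
The quadruples `(s(m+1), s(m), s(2^n-(m+1)), s(2^n-m))` of level `n + 1` arise from those of level
`n` by the moves `(a, b, c, d) ↦ (a + b, b, c + d, d)` (position `2m`) and
`(a, b, c, d) ↦ (a, a + b, c, c + d)` (position `2m+1`), starting from the identity `(1, 0, 0, 1)`.
Conversely, every `(a, b, c, d) ≠ (1, 0, 0, 1)` with `ad = bc + 1` is reduced by the inverse of one
of these moves (subtract the smaller of `a, b` from the larger, and likewise for `c, d`) to a
smaller quadruple with the same determinant.
-/

lemma stern_zero : stern 0 = 0 := by rw [stern]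

lemma stern_one : stern 1 = 1 := by rw [stern]

lemma stern_two_mul (m : ℕ) : stern (2 * m) = stern m := by
  rcases m with _ | k
  · rfl
  · rw [show 2 * (k + 1) = 2 * k + 2 by ring, stern]
    simp [show 2 * k / 2 = k by omega]

lemma stern_two_mul_add_one (m : ℕ) : stern (2 * m + 1) = stern m + stern (m + 1) := by
  rcases m with _ | k
  · simp [stern_zero, stern_one]
  · rw [show 2 * (k + 1) + 1 = (2 * k + 1) + 2 by ring, stern]
    simp [show (2 * k + 1) % 2 = 1 by omega, show (2 * k + 1) / 2 = k by omega]

def IsSternQuadAt (n m a b c d : ℕ) : Prop :=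
  m < 2 ^ n ∧ a = stern (m + 1) ∧ b = stern m ∧
    c = stern (2 ^ n - (m + 1)) ∧ d = stern (2 ^ n - m)

namespace IsSternQuadAt

lemma one_zero_zero_one : IsSternQuadAt 0 0 1 0 0 1 :=
  ⟨by norm_num, stern_one.symm, stern_zero.symm, stern_zero.symm, stern_one.symm⟩

variable {n m a b c d : ℕ}

lemma add_left (h : IsSternQuadAt n m a b c d) :
    IsSternQuadAt (n + 1) (2 * m) (a + b) b (c + d) d := by
  obtain ⟨hm, rfl, rfl, rfl, rfl⟩ := h
  have hpow : 2 ^ (n + 1) = 2 * 2 ^ n := by ring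
  refine ⟨by omega, ?_, (stern_two_mul m).symm, ?_, ?_⟩
  · rw [stern_two_mul_add_one, add_comm]
  · rw [show 2 ^ (n + 1) - (2 * m + 1) = 2 * (2 ^ n - (m + 1)) + 1 by omega,
      stern_two_mul_add_one, show 2 ^ n - (m + 1) + 1 = 2 ^ n - m by omega]
  · rw [show 2 ^ (n + 1) - 2 * m = 2 * (2 ^ n - m) by omega, stern_two_mul]

lemma add_right (h : IsSternQuadAt n m a b c d) :
    IsSternQuadAt (n + 1) (2 * m + 1) a (a + b) c (c + d) := by
  obtain ⟨hm, rfl, rfl, rfl, rfl⟩ := h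
  have hpow : 2 ^ (n + 1) = 2 * 2 ^ n := by ring
  refine ⟨by omega, ?_, ?_, ?_, ?_⟩
  · rw [show 2 * m + 1 + 1 = 2 * (m + 1) by ring, stern_two_mul]
  · rw [stern_two_mul_add_one, add_comm]
  · rw [show 2 ^ (n + 1) - (2 * m + 1 + 1) = 2 * (2 ^ n - (m + 1)) by omega, stern_two_mul]
  · rw [show 2 ^ (n + 1) - (2 * m + 1) = 2 * (2 ^ n - (m + 1)) + 1 by omega,
      stern_two_mul_add_one, show 2 ^ n - (m + 1) + 1 = 2 ^ n - m by omega]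

end IsSternQuadAt

lemma lt_of_mul_eq_mul_add_one_of_le {a b c d : ℕ} (h : a * d = b * c + 1) (hab : a ≤ b) : c < d := by
  by_contra! hdc
  have := Nat.mul_le_mul hab hdc
  omega

lemma le_of_mul_eq_mul_add_one_of_lt {a b c d : ℕ} (h : a * d = b * c + 1) (hba : b < a)
    (hbc : 0 < b + c) : d ≤ c := by
  by_contra! hcd
  nlinarith [Nat.mul_le_mul (Nat.succ_le_of_lt hba) (Nat.succ_le_of_lt hcd)]

theorem exists_isSternQuadAt_of_mul_eq_mul_add_one {a b c d : ℕ} (h : a * d = b * c + 1) :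
    ∃ n m, IsSternQuadAt n m a b c d := by
  -- `ha` and `hd` make both recursive calls decrease `a + b + c + d`
  have hd : 0 < d := Nat.pos_of_ne_zero (by rintro rfl; simp at h)
  have ha : 0 < a := Nat.pos_of_ne_zero (by rintro rfl; simp at h)
  by_cases hbc : b = 0 ∧ c = 0
  · obtain ⟨rfl, rfl⟩ := hbc
    obtain ⟨rfl, rfl⟩ : a = 1 ∧ d = 1 := by simpa using h
    exact ⟨0, 0, .one_zero_zero_one⟩
  have h' : (a : ℤ) * d = b * c + 1 := by exact_mod_cast h
  by_cases hab : a ≤ b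
  · have hcd := lt_of_mul_eq_mul_add_one_of_le h hab
    have hsub : a * (d - c) = (b - a) * c + 1 := by
      zify [hab, hcd.le]
      linear_combination h'
    obtain ⟨n, m, hq⟩ := exists_isSternQuadAt_of_mul_eq_mul_add_one hsub
    refine ⟨n + 1, 2 * m + 1, ?_⟩
    simpa only [Nat.add_sub_cancel' hab, Nat.add_sub_cancel' hcd.le] using hq.add_right
  · push Not at hab
    have hdc := le_of_mul_eq_mul_add_one_of_lt h hab (by omega)
    have hsub : (a - b) * d = b * (c - d) + 1 := by
      zify [hab.le, hdc]
      linear_combination h'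
    obtain ⟨n, m, hq⟩ := exists_isSternQuadAt_of_mul_eq_mul_add_one hsub
    refine ⟨n + 1, 2 * m, ?_⟩
    simpa only [Nat.sub_add_cancel hab.le, Nat.sub_add_cancel hdc] using hq.add_left
termination_by a + b + c + d

theorem unimodular_eq_stern (a b c d : ℕ) (h : a * d = b * c + 1) :
    ∃ n m : ℕ, m < 2 ^ n ∧ a = stern (m + 1) ∧ b = stern m ∧
      c = stern (2 ^ n - (m + 1)) ∧ d = stern (2 ^ n - m) :=
  exists_isSternQuadAt_of_mul_eq_mul_add_one h
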